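/- Let F = Q1 x1 ... Qn xn. φ be a quantified Boolean formula in prenex normal form with φ in CNF. Construct F' from F as follows: for every universally quantified variable x_i, introduce a fresh existentially quantified variable z_i placed anywhere after x_i in the quantifier prefix; add the clauses (x_i ∨ ¬z_i) and (¬x_i ∨ z_i); and in every original clause of φ replace each occurrence of the literal x_i by z_i and of ¬x_i by ¬z_i. Then F' is a QBF in prenex CNF in which every clause contains at most one universal literal (indeed, every clause containing a universal literal has size 2), and F is true if and only if F' is true. -/

import Mathlib

/-! Quantified Boolean formulas in prenex CNF. -/

inductive Quant : Type
  | all : Quant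
  | ex : Quant
deriving DecidableEq

/-- A quantifier prefix: a list of (quantifier, variable) pairs. -/
abbrev QPrefix : Type := List (Quant × ℕ)

/-- A literal: a variable together with its polarity. -/
abbrev QLit : Type := ℕ × Bool

abbrev QClause : Type := List QLit

abbrev Cnf : Type := List QClause

def evalLit (v : ℕ → Bool) (l : QLit) : Prop := v l.1 = l.2

def evalClause (v : ℕ → Bool) (c : QClause) : Prop := ∃ l ∈ c, evalLit v l

def evalCnf (v : ℕ → Bool) (φ : Cnf) : Prop := ∀ c ∈ φ, evalClause v c

/-- Truth of the QBF `Q₁x₁ … Qₙxₙ. φ` under the ambient valuation `v`. -/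
def QbfTrue (φ : Cnf) : QPrefix → (ℕ → Bool) → Prop
  | [], v => evalCnf v φ
  | (Quant.all, x) :: p, v => ∀ b, QbfTrue φ p (Function.update v x b)
  | (Quant.ex, x) :: p, v => ∃ b, QbfTrue φ p (Function.update v x b)

/-- Replace each literal of a variable that is universal in `p` by the corresponding
literal of its fresh copy. -/
def replLit (p : QPrefix) (fresh : ℕ → ℕ) (l : QLit) : QLit :=
  if (Quant.all, l.1) ∈ p then (fresh l.1, l.2) else l

/-- The prefix of `F'`: each universal variable `x` is followed by the fresh existential
variable `fresh x` (an instance of placing `z_i` anywhere after `x_i`). -/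
def primePrefix (fresh : ℕ → ℕ) (p : QPrefix) : QPrefix :=
  p.flatMap fun q => if q.1 = Quant.all then [q, (Quant.ex, fresh q.2)] else [q]

/-- The clauses `(x ∨ ¬z)` and `(¬x ∨ z)` for every universal variable `x` (with
`z = fresh x`), whose conjunction is logically equivalent to `x ↔ z`. -/
def eqClauses (fresh : ℕ → ℕ) (p : QPrefix) : Cnf :=
  p.flatMap fun q => if q.1 = Quant.all then
    [[(q.2, true), (fresh q.2, false)], [(q.2, false), (fresh q.2, true)]] else []

/-- The matrix of `F'`: the original clauses with universal literals replaced by literals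
of the fresh copies, together with the equivalence clauses. -/
def primeCnf (p : QPrefix) (fresh : ℕ → ℕ) (φ : Cnf) : Cnf :=
  φ.map (fun c => c.map (replLit p fresh)) ++ eqClauses fresh p

/-! The copy `z = fresh x` of a universal variable `x` is existential and quantified right
after `x`, so the existential player can always set `z := x`; the clauses `(x ∨ ¬z) ∧ (¬x ∨ z)`
force exactly this choice, and under it every renamed clause evaluates like the original one.
Conversely, every valuation satisfying the matrix of `F'` satisfies `φ`, and the copies do not
occur in `φ`, so forgetting them turns a winning strategy for `F'` into one for `F`. -/

open Function

section Semantics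

variable {φ : Cnf}

theorem qbfTrue_congr {v w : ℕ → Bool} (s : QPrefix) (h : ∀ c ∈ φ, ∀ l ∈ c, v l.1 = w l.1) :
    QbfTrue φ s v ↔ QbfTrue φ s w := by
  induction s generalizing v w with
  | nil =>
    simp only [QbfTrue, evalCnf, evalClause, evalLit]
    exact forall₂_congr fun c hc => exists_congr fun l => and_congr_right fun hl => by
      rw [h c hc l hl]
  | cons q s ih =>
    obtain ⟨k, x⟩ := q
    have hupd (b : Bool) : QbfTrue φ s (update v x b) ↔ QbfTrue φ s (update w x b) := by
      refine ih fun c hc l hl => ?_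
      by_cases hx : l.1 = x
      · simp [hx]
      · simp [update_of_ne hx, h c hc l hl]
    cases k
    exacts [forall_congr' hupd, exists_congr hupd]

theorem qbfTrue_update_of_forall_ne {v : ℕ → Bool} {x : ℕ} {b : Bool} (s : QPrefix)
    (hx : ∀ c ∈ φ, ∀ l ∈ c, l.1 ≠ x) : QbfTrue φ s (update v x b) ↔ QbfTrue φ s v :=
  qbfTrue_congr s fun c hc l hl => update_of_ne (hx c hc l hl) _ _

end Semantics

section Construction

variable {fresh : ℕ → ℕ} {p : QPrefix} {φ : Cnf} {v : ℕ → Bool}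

@[simp]
theorem primePrefix_cons_all (x : ℕ) (p : QPrefix) :
    primePrefix fresh ((Quant.all, x) :: p) =
      (Quant.all, x) :: (Quant.ex, fresh x) :: primePrefix fresh p := by
  simp [primePrefix]

@[simp]
theorem primePrefix_cons_ex (x : ℕ) (p : QPrefix) :
    primePrefix fresh ((Quant.ex, x) :: p) = (Quant.ex, x) :: primePrefix fresh p := by
  simp [primePrefix]

theorem all_mem_primePrefix_iff {x : ℕ} :
    (Quant.all, x) ∈ primePrefix fresh p ↔ (Quant.all, x) ∈ p := by
  induction p with
  | nil => simp [primePrefix]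
  | cons q p ih =>
    obtain ⟨_ | _, y⟩ := q <;> simp [ih]

theorem mem_eqClauses {c : QClause} :
    c ∈ eqClauses fresh p ↔ ∃ x, (Quant.all, x) ∈ p ∧ ∃ b, c = [(x, b), (fresh x, !b)] := by
  simp only [eqClauses, List.mem_flatMap]
  constructor
  · rintro ⟨⟨_ | _, x⟩, hx, hc⟩
    · simp only [if_pos, List.mem_cons, List.not_mem_nil, or_false] at hc
      rcases hc with rfl | rfl
      exacts [⟨x, hx, true, rfl⟩, ⟨x, hx, false, rfl⟩]
    · simp at hc
  · rintro ⟨x, hx, b, rfl⟩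
    refine ⟨(Quant.all, x), hx, ?_⟩
    cases b <;> simp

def CopiesAgree (fresh : ℕ → ℕ) (p : QPrefix) (v : ℕ → Bool) : Prop :=
  ∀ x, (Quant.all, x) ∈ p → v (fresh x) = v x

theorem evalCnf_eqClauses_iff : evalCnf v (eqClauses fresh p) ↔ CopiesAgree fresh p v := by
  simp only [evalCnf, mem_eqClauses, CopiesAgree]
  constructor
  · intro h x hx
    have htrue := h _ ⟨x, hx, true, rfl⟩
    have hfalse := h _ ⟨x, hx, false, rfl⟩
    simp only [evalClause, evalLit, List.mem_cons, List.not_mem_nil, or_false,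
      exists_eq_or_imp, exists_eq_left, Bool.not_true, Bool.not_false] at htrue hfalse
    cases hvx : v x <;> cases hvz : v (fresh x) <;> simp_all
  · rintro h c ⟨x, hx, b, rfl⟩
    by_cases hb : v x = b
    · exact ⟨(x, b), by simp, hb⟩
    · exact ⟨(fresh x, !b), by simp, by simp [evalLit, h x hx, Bool.eq_not.mpr hb]⟩

theorem evalLit_replLit_iff (h : CopiesAgree fresh p v) (l : QLit) :
    evalLit v (replLit p fresh l) ↔ evalLit v l := by
  unfold replLit
  split_ifs with hl
  · simp only [evalLit, h l.1 hl]
  · rfl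

theorem evalCnf_primeCnf_iff :
    evalCnf v (primeCnf p fresh φ) ↔ evalCnf v φ ∧ CopiesAgree fresh p v := by
  simp only [primeCnf, evalCnf, List.mem_append, or_imp, forall_and, List.forall_mem_map]
  rw [← evalCnf, evalCnf_eqClauses_iff]
  refine and_congr_left fun hagree => forall₂_congr fun c _ => ?_
  simp only [evalClause, List.mem_map, exists_exists_and_eq_and, evalLit_replLit_iff hagree]

theorem CopiesAgree.update {t : QPrefix} {x : ℕ} (h : CopiesAgree fresh t v)
    (hx : ∀ y, (Quant.all, y) ∈ t → x ≠ y ∧ x ≠ fresh y) (b : Bool) :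
    CopiesAgree fresh t (update v x b) := fun y hy => by
  rw [update_of_ne (hx y hy).2.symm, update_of_ne (hx y hy).1.symm, h y hy]

theorem eq_pair_of_mem_primeCnf (hfresh : ∀ x q, (q, fresh x) ∉ p) {c : QClause} {l : QLit}
    (hc : c ∈ primeCnf p fresh φ) (hl : l ∈ c) (hall : (Quant.all, l.1) ∈ p) :
    c = [l, (fresh l.1, !l.2)] := by
  rcases List.mem_append.mp hc with hc | hc
  · obtain ⟨c, -, rfl⟩ := List.mem_map.mp hc
    obtain ⟨l, -, rfl⟩ := List.mem_map.mp hl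
    unfold replLit at hall
    split_ifs at hall with hl
    exacts [absurd hall (hfresh _ _), absurd hall hl]
  · obtain ⟨x, -, b, rfl⟩ := mem_eqClauses.mp hc
    simp only [List.mem_cons, List.not_mem_nil, or_false] at hl
    rcases hl with rfl | rfl
    · rfl
    · exact absurd hall (hfresh _ _)

end Construction

section Equivalence

variable {fresh : ℕ → ℕ} {φ ψ : Cnf}

theorem qbfTrue_of_qbfTrue_primePrefix (hψ : ∀ w, evalCnf w ψ → evalCnf w φ)
    (hφ : ∀ x, ∀ c ∈ φ, ∀ l ∈ c, l.1 ≠ fresh x) (s : QPrefix) {v : ℕ → Bool} :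
    QbfTrue ψ (primePrefix fresh s) v → QbfTrue φ s v := by
  induction s generalizing v with
  | nil => exact hψ v
  | cons q s ih =>
    obtain ⟨_ | _, x⟩ := q <;> simp only [primePrefix_cons_all, primePrefix_cons_ex, QbfTrue]
    · intro h b
      obtain ⟨_, hb⟩ := h b
      exact (qbfTrue_update_of_forall_ne s (hφ x)).mp (ih hb)
    · rintro ⟨b, hb⟩
      exact ⟨b, ih hb⟩

theorem qbfTrue_primePrefix_of_qbfTrue {p : QPrefix}
    (hψ : ∀ w, evalCnf w φ → CopiesAgree fresh p w → evalCnf w ψ)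
    (hinj : Injective fresh) (hfresh : ∀ x q, (q, fresh x) ∉ p)
    (hnodup : (p.map Prod.snd).Nodup) (hφ : ∀ x, ∀ c ∈ φ, ∀ l ∈ c, l.1 ≠ fresh x)
    (s t : QPrefix) {v : ℕ → Bool} (hp : t ++ s = p) (hv : CopiesAgree fresh t v) :
    QbfTrue φ s v → QbfTrue ψ (primePrefix fresh s) v := by
  induction s generalizing t v with
  | nil =>
    rw [List.append_nil] at hp
    subst hp
    exact (hψ v · hv)
  | cons q s ih =>
    obtain ⟨k, x⟩ := q
    have hxp : (k, x) ∈ p := hp ▸ List.mem_append_right t List.mem_cons_self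
    have hxt : ∀ y, (Quant.all, y) ∈ t → x ≠ y ∧ x ≠ fresh y := fun y hy => by
      refine ⟨?_, fun h => hfresh y k (h ▸ hxp)⟩
      rintro rfl
      rw [← hp, List.map_append, List.nodup_append] at hnodup
      exact hnodup.2.2 _ (List.mem_map_of_mem hy) _ List.mem_cons_self rfl
    have hp' : t ++ [(k, x)] ++ s = p := by simp [← hp]
    cases k <;> simp only [primePrefix_cons_all, primePrefix_cons_ex, QbfTrue]
    · intro h b
      refine ⟨b, ih _ hp' (fun y hy => ?_) ((qbfTrue_update_of_forall_ne s (hφ x)).mpr (h b))⟩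
      rcases List.mem_append.mp hy with hy | hy
      · refine ((hv.update hxt b).update (fun z hz => ⟨?_, ?_⟩) b) y hy
        · exact fun h => hfresh x Quant.all (h ▸ hp ▸ List.mem_append_left _ hz)
        · exact fun h => (hxt z hz).1 (hinj h)
      · obtain rfl : y = x := by simpa using hy
        have hyy : y ≠ fresh y := fun h => hfresh y Quant.all (h ▸ hxp)
        simp [update_of_ne hyy]
    · rintro ⟨b, hb⟩
      refine ⟨b, ih _ hp' (fun y hy => ?_) hb⟩
      rcases List.mem_append.mp hy with hy | hy
      · exact hv.update hxt b y hy
      · simp at hy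

end Equivalence

/-- the construction `F ↦ F'` yields a prenex-CNF QBF in which every
clause contains at most one universal literal — indeed every clause containing a universal
literal has size 2 — and `F` is true iff `F'` is true. -/
theorem qbf_to_qbf_cnf_1
    (p : QPrefix) (φ : Cnf) (fresh : ℕ → ℕ)
    (hinj : Function.Injective fresh)
    (hfresh : ∀ x q, (q, fresh x) ∉ p)
    (hnodup : (p.map Prod.snd).Nodup)
    (hclosed : ∀ c ∈ φ, ∀ l ∈ c, ∃ q, (q, l.1) ∈ p) :
    (∀ c ∈ primeCnf p fresh φ, ∀ l1 ∈ c, ∀ l2 ∈ c,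
      (Quant.all, l1.1) ∈ primePrefix fresh p →
      (Quant.all, l2.1) ∈ primePrefix fresh p → l1 = l2) ∧
    (∀ c ∈ primeCnf p fresh φ,
      (∃ l ∈ c, (Quant.all, l.1) ∈ primePrefix fresh p) → c.length = 2) ∧
    (∀ v, QbfTrue φ p v ↔ QbfTrue (primeCnf p fresh φ) (primePrefix fresh p) v) := by
  have hφ : ∀ x, ∀ c ∈ φ, ∀ l ∈ c, l.1 ≠ fresh x := fun x c hc l hl h => by
    obtain ⟨q, hq⟩ := hclosed c hc l hl
    exact hfresh x q (h ▸ hq)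
  have hpair {c : QClause} {l : QLit} (hc : c ∈ primeCnf p fresh φ) (hl : l ∈ c)
      (hall : (Quant.all, l.1) ∈ primePrefix fresh p) : c = [l, (fresh l.1, !l.2)] :=
    eq_pair_of_mem_primeCnf hfresh hc hl (all_mem_primePrefix_iff.mp hall)
  refine ⟨fun c hc l1 h1 l2 h2 ha1 ha2 => ?_, fun c hc ⟨l, hl, hall⟩ => ?_, fun v => ⟨?_, ?_⟩⟩
  · exact (List.cons_eq_cons.mp ((hpair hc h1 ha1).symm.trans (hpair hc h2 ha2))).1
  · rw [hpair hc hl hall, List.length_cons, List.length_singleton]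
  · exact qbfTrue_primePrefix_of_qbfTrue
      (fun w hw hagree => evalCnf_primeCnf_iff.mpr ⟨hw, hagree⟩) hinj hfresh hnodup hφ p [] rfl
      fun _ h => absurd h List.not_mem_nil
  · exact qbfTrue_of_qbfTrue_primePrefix (fun w hw => (evalCnf_primeCnf_iff.mp hw).1) hφ p
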